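/- arXiv:1307.7749 — 2 statements merged into one kernel-verified Lean document; each statement's English description precedes it below -/
import Mathlib

section
/- Let H be the join of an empty graph on s vertices with a graph G on t vertices, where t > s. If the minimum degree of G satisfies δ(G) > t − s, then μ(H) > t − s, and hence Q_μ = Q(G) + sI − (s/(t−μ))J is a Z-matrix with all off-diagonal entries strictly negative; consequently every eigenvector of Q(H) for μ(H) is strictly positive on the G-side and strictly negative on the independent set S (or vice versa), i.e., H is S-Roth. -/
open Matrix SimpleGraph Finset
open scoped Classical

/-- The signless Laplacian matrix `Q(G) = D(G) + A(G)` of a simple graph. -/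
noncomputable def signlessLap {V : Type*} [Fintype V] (G : SimpleGraph V) :
    Matrix V V ℝ :=
  fun i j => (if i = j then (G.degree i : ℝ) else 0) + (if G.Adj i j then 1 else 0)

/-- The join `H = \overline{K}_s ∨ G` of the empty graph on `s` vertices (the `inl`
side, the independent set `S`) with a graph `G` on `t` vertices (the `inr` side). -/
def joinEmpty (s : ℕ) {t : ℕ} (G : SimpleGraph (Fin t)) :
    SimpleGraph (Fin s ⊕ Fin t) where
  Adj u v :=
    match u, v with
    | .inl _, .inl _ => False
    | .inl _, .inr _ => True
    | .inr _, .inl _ => True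
    | .inr a, .inr b => G.Adj a b
  symm := ⟨by rintro (a | a) (b | b) h <;> simp_all; exact h.symm⟩
  loopless := ⟨by rintro (a | a) h <;> simp_all⟩

/-- `H = \overline{K}_s ∨ G` is `S`-Roth: every eigenvector of the smallest signless
Laplacian eigenvalue `μ` of `H` is strictly positive on `S` and strictly negative on
`V(G)`, or vice versa. -/
def IsSRoth {s t : ℕ} (G : SimpleGraph (Fin t)) (μ : ℝ) : Prop :=
  ∀ x : Fin s ⊕ Fin t → ℝ, x ≠ 0 → signlessLap (joinEmpty s G) *ᵥ x = μ • x →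
    ((∀ i, 0 < x (Sum.inl i)) ∧ (∀ j, x (Sum.inr j) < 0)) ∨
    ((∀ i, x (Sum.inl i) < 0) ∧ (∀ j, 0 < x (Sum.inr j)))

/-!
Vertices of `S` have degree `t` in `H` and vertices of `G` degree `> t`, so
`xᵀ Q x = 2 xᵀ D x - xᵀ L x ≥ 2 xᵀ D x - n ‖x‖²` (as `λ_max(L) ≤ n`) gives `μ > t - s`, using
that an eigenvector for `μ` cannot vanish on `V(G)` since `μ ≤ t - 1` (test vector `(-1,…,-1; e_j)`).

For `μ < t` an eigenvector `(y; z)` of `Q(H)` is constant, `(∑ z) / (μ - t)`, on `S`, and eliminating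
`y` gives `Q_μ z = μ z`; pairing any `w` with the optimal constant on `S` shows that `μ` is also the
least Rayleigh quotient of `Q_μ`. Since `s / (t - μ) > 1`, `Q_μ` has negative off-diagonal entries,
so replacing `z` by `|z|` does not raise its Rayleigh quotient: `|z|` is an eigenvector too, and a
nonnegative eigenvector of such a matrix vanishing somewhere vanishes everywhere. Hence `z` is
strictly of one sign, and `y` of the opposite one.
-/

lemma signlessLap_eq_degMatrix_add_adjMatrix {V : Type*} [Fintype V] (G : SimpleGraph V) :
    signlessLap G = G.degMatrix ℝ + G.adjMatrix ℝ := by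
  ext i j
  simp [signlessLap, degMatrix, diagonal_apply, adjMatrix_apply]

lemma signlessLap_isHermitian {V : Type*} [Fintype V] (G : SimpleGraph V) :
    (signlessLap G).IsHermitian := by
  rw [IsHermitian, conjTranspose_eq_transpose_of_trivial, signlessLap_eq_degMatrix_add_adjMatrix]
  exact (isSymm_degMatrix ℝ G).add (isSymm_adjMatrix G)

lemma sum_sum_sub_sq {V : Type*} [Fintype V] (x : V → ℝ) :
    ∑ i, ∑ j, (x i - x j) ^ 2 = 2 * (Fintype.card V * (x ⬝ᵥ x) - (∑ i, x i) ^ 2) := by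
  have h : ∀ i j, (x i - x j) ^ 2 = x i * x i + x j * x j - 2 * x i * x j := fun i j => by ring
  simp only [h, sum_add_distrib, sum_sub_distrib, sum_const, card_univ, nsmul_eq_mul,
    ← mul_sum, ← sum_mul, dotProduct]
  ring

lemma dotProduct_lapMatrix_mulVec_le {V : Type*} [Fintype V] (G : SimpleGraph V) (x : V → ℝ) :
    x ⬝ᵥ (G.lapMatrix ℝ *ᵥ x) ≤ Fintype.card V * (x ⬝ᵥ x) := by
  rw [← toLinearMap₂'_apply', lapMatrix_toLinearMap₂']
  calc (∑ i, ∑ j, if G.Adj i j then (x i - x j) ^ 2 else 0) / 2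
      ≤ (∑ i, ∑ j, (x i - x j) ^ 2) / 2 := by
        gcongr with i _ j _
        split_ifs
        exacts [le_rfl, by positivity]
    _ ≤ Fintype.card V * (x ⬝ᵥ x) := by
        rw [sum_sum_sub_sq]
        nlinarith [sq_nonneg (∑ i, x i)]

lemma le_dotProduct_signlessLap_mulVec {V : Type*} [Fintype V] (G : SimpleGraph V)
    (x : V → ℝ) :
    2 * ∑ v, (G.degree v : ℝ) * x v * x v - Fintype.card V * (x ⬝ᵥ x) ≤
      x ⬝ᵥ (signlessLap G *ᵥ x) := by
  have hQ : signlessLap G = (2 : ℝ) • G.degMatrix ℝ - G.lapMatrix ℝ := by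
    rw [signlessLap_eq_degMatrix_add_adjMatrix, lapMatrix]
    module
  rw [hQ, sub_mulVec, smul_mulVec, dotProduct_sub, dotProduct_smul,
    G.dotProduct_mulVec_degMatrix, smul_eq_mul]
  linarith [dotProduct_lapMatrix_mulVec_le G x]

section Rayleigh

variable {n : Type*} [Fintype n] [DecidableEq n] {A : Matrix n n ℝ} {μ : ℝ}

lemma posSemidef_sub_smul_one_iff (hA : A.IsHermitian) :
    (A - μ • 1).PosSemidef ↔ ∀ x : n → ℝ, μ * (x ⬝ᵥ x) ≤ x ⬝ᵥ (A *ᵥ x) := by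
  have hform : ∀ x : n → ℝ, star x ⬝ᵥ ((A - μ • 1) *ᵥ x) = x ⬝ᵥ (A *ᵥ x) - μ * (x ⬝ᵥ x) := by
    intro x
    simp [sub_mulVec, smul_mulVec, dotProduct_sub, dotProduct_smul]
  have hB : (A - μ • 1).IsHermitian := hA.sub (isHermitian_one.smul (IsSelfAdjoint.all μ))
  refine ⟨fun h x => ?_, fun h => .of_dotProduct_mulVec_nonneg hB fun x => ?_⟩
  · linarith [h.dotProduct_mulVec_nonneg x, hform x]
  · linarith [h x, hform x]

lemma posSemidef_sub_smul_one_of_forall_le (hA : A.IsHermitian)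
    (h : ∀ (ν : ℝ) (x : n → ℝ), x ≠ 0 → A *ᵥ x = ν • x → μ ≤ ν) :
    (A - μ • 1).PosSemidef := by
  have hB : (A - μ • 1).IsHermitian := hA.sub (isHermitian_one.smul (IsSelfAdjoint.all μ))
  refine hB.posSemidef_iff_eigenvalues_nonneg.mpr fun i => ?_
  have hv : A *ᵥ ⇑(hB.eigenvectorBasis i) = (hB.eigenvalues i + μ) • ⇑(hB.eigenvectorBasis i) := by
    have := hB.mulVec_eigenvectorBasis i
    rw [sub_mulVec, smul_mulVec, one_mulVec, sub_eq_iff_eq_add] at this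
    rw [this, add_smul]
  have hne : (⇑(hB.eigenvectorBasis i) : n → ℝ) ≠ 0 := fun h0 =>
    hB.eigenvectorBasis.orthonormal.ne_zero i (by ext j; exact congrFun h0 j)
  have := h _ _ hne hv
  simp only [Pi.zero_apply]
  linarith

end Rayleigh

section ZMatrix

variable {n : Type*} [Fintype n] {M : Matrix n n ℝ} {μ : ℝ}

lemma dotProduct_mulVec_abs_le (hM : ∀ i j, i ≠ j → M i j ≤ 0) (z : n → ℝ) :
    |z| ⬝ᵥ (M *ᵥ |z|) ≤ z ⬝ᵥ (M *ᵥ z) := by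
  simp only [dotProduct, mulVec, mul_sum, Pi.abs_apply]
  refine sum_le_sum fun i _ => sum_le_sum fun j _ => ?_
  obtain rfl | hij := eq_or_ne i j
  · exact le_of_eq (by linear_combination M i i * abs_mul_abs_self (z i))
  · have : z i * z j ≤ |z i| * |z j| := by rw [← abs_mul]; exact le_abs_self _
    nlinarith [hM i j hij]

lemma eq_zero_of_nonneg_of_mulVec_eq_smul (hM : ∀ i j, i ≠ j → M i j < 0) {u : n → ℝ}
    (hu : 0 ≤ u) (hMu : M *ᵥ u = μ • u) {j : n} (hj : u j = 0) : u = 0 := by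
  have hrow : ∑ k ∈ univ.erase j, M j k * u k = 0 := by
    have := congrFun hMu j
    rw [mulVec, dotProduct, ← add_sum_erase _ _ (mem_univ j)] at this
    simpa [hj] using this
  have hterm := (sum_eq_zero_iff_of_nonpos fun k hk =>
    mul_nonpos_of_nonpos_of_nonneg (hM j k (ne_of_mem_erase hk).symm).le (hu k)).mp hrow
  funext k
  obtain rfl | hkj := eq_or_ne k j
  · exact hj
  · exact (mul_eq_zero.mp (hterm k (mem_erase.mpr ⟨hkj, mem_univ k⟩))).resolve_left
      (hM j k hkj.symm).ne

variable [DecidableEq n]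

lemma abs_mulVec_eq_smul (hM : ∀ i j, i ≠ j → M i j ≤ 0) (hμ : (M - μ • 1).PosSemidef)
    {z : n → ℝ} (hz : M *ᵥ z = μ • z) : M *ᵥ |z| = μ • |z| := by
  have hB : ∀ i j, i ≠ j → (M - μ • 1) i j ≤ 0 := fun i j hij => by
    simpa [one_apply_ne hij] using hM i j hij
  have hBz : (M - μ • 1) *ᵥ z = 0 := by simp [sub_mulVec, smul_mulVec, hz]
  have hle := dotProduct_mulVec_abs_le hB z
  rw [hBz, dotProduct_zero] at hle
  have hzero : star |z| ⬝ᵥ ((M - μ • 1) *ᵥ |z|) = 0 :=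
    le_antisymm (by simpa using hle) (hμ.dotProduct_mulVec_nonneg _)
  rw [hμ.dotProduct_mulVec_zero_iff, sub_mulVec, smul_mulVec, one_mulVec, sub_eq_zero] at hzero
  exact hzero

theorem pos_or_neg_of_mulVec_eq_smul (hM : ∀ i j, i ≠ j → M i j < 0)
    (hμ : (M - μ • 1).PosSemidef) {z : n → ℝ} (hz0 : z ≠ 0) (hz : M *ᵥ z = μ • z) :
    (∀ j, 0 < z j) ∨ ∀ j, z j < 0 := by
  have habs := abs_mulVec_eq_smul (fun i j hij => (hM i j hij).le) hμ hz
  have hne : ∀ j, z j ≠ 0 := fun j hj => by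
    have h0 :=
      eq_zero_of_nonneg_of_mulVec_eq_smul hM (fun k => by simp) habs (j := j) (by simp [hj])
    exact hz0 (funext fun k => abs_eq_zero.mp (by simpa using congrFun h0 k))
  by_cases hneg : ∃ j, z j < 0
  · obtain ⟨j₀, hj₀⟩ := hneg
    have hsum : |z| + z = 0 := eq_zero_of_nonneg_of_mulVec_eq_smul hM
      (fun k => by simpa [← neg_le_iff_add_nonneg'] using neg_abs_le (z k))
      (by rw [mulVec_add, habs, hz, smul_add])
      (j := j₀) (by simp [abs_of_neg hj₀])
    refine .inr fun j => lt_of_le_of_ne ?_ (hne j)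
    have := congrFun hsum j
    simp only [Pi.add_apply, Pi.abs_apply, Pi.zero_apply] at this
    linarith [abs_nonneg (z j)]
  · push Not at hneg
    exact .inl fun j => (hneg j).lt_of_ne' (hne j)

end ZMatrix

section Join

variable {s t : ℕ} (G : SimpleGraph (Fin t))

@[simp] lemma joinEmpty_adj_inl_inl (i i' : Fin s) : ¬ (joinEmpty s G).Adj (.inl i) (.inl i') :=
  id

@[simp] lemma joinEmpty_adj_inl_inr (i : Fin s) (j : Fin t) :
    (joinEmpty s G).Adj (.inl i) (.inr j) :=
  trivial

@[simp] lemma joinEmpty_adj_inr_inl (j : Fin t) (i : Fin s) :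
    (joinEmpty s G).Adj (.inr j) (.inl i) :=
  trivial

@[simp] lemma joinEmpty_adj_inr_inr (j k : Fin t) :
    (joinEmpty s G).Adj (.inr j) (.inr k) ↔ G.Adj j k :=
  Iff.rfl

lemma joinEmpty_degree_inl (i : Fin s) : (joinEmpty s G).degree (.inl i) = t := by
  rw [← card_neighborFinset_eq_degree]
  have : (joinEmpty s G).neighborFinset (.inl i) = univ.map .inr := by
    ext (u | u) <;> simp
  simp [this]

lemma joinEmpty_degree_inr (j : Fin t) :
    (joinEmpty s G).degree (.inr j) = s + G.degree j := by
  rw [← card_neighborFinset_eq_degree, ← card_neighborFinset_eq_degree]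
  have : (joinEmpty s G).neighborFinset (.inr j) =
      (univ.map .inl).disjUnion ((G.neighborFinset j).map .inr)
        (by simp [Finset.disjoint_left]) := by
    ext (u | u) <;> simp
  rw [this, card_disjUnion, card_map, card_map, card_univ, Fintype.card_fin]

lemma signlessLap_joinEmpty :
    signlessLap (joinEmpty s G) =
      fromBlocks ((t : ℝ) • 1) (of fun _ _ => 1) (of fun _ _ => 1)
        (signlessLap G + (s : ℝ) • 1) := by
  ext (i | i) (j | j) <;>
    simp [signlessLap, joinEmpty_degree_inl, joinEmpty_degree_inr, one_apply]
  split_ifs <;> ring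

lemma signlessLap_joinEmpty_mulVec (y : Fin s → ℝ) (z : Fin t → ℝ) :
    signlessLap (joinEmpty s G) *ᵥ Sum.elim y z =
      Sum.elim (fun i => t * y i + ∑ j, z j)
        (fun j => ∑ i, y i + ((signlessLap G + (s : ℝ) • 1) *ᵥ z) j) := by
  rw [signlessLap_joinEmpty, fromBlocks_mulVec]
  simp only [smul_mulVec, one_mulVec, Sum.elim_comp_inl, Sum.elim_comp_inr]
  ext (i | j) <;> simp [mulVec, dotProduct]

lemma dotProduct_signlessLap_joinEmpty_mulVec (y : Fin s → ℝ) (z : Fin t → ℝ) :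
    Sum.elim y z ⬝ᵥ (signlessLap (joinEmpty s G) *ᵥ Sum.elim y z) =
      t * (y ⬝ᵥ y) + 2 * (∑ i, y i) * (∑ j, z j) +
        z ⬝ᵥ ((signlessLap G + (s : ℝ) • 1) *ᵥ z) := by
  rw [signlessLap_joinEmpty_mulVec, sumElim_dotProduct_sumElim]
  simp only [dotProduct, mul_add, sum_add_distrib, ← mul_sum, ← sum_mul, mul_left_comm _ (t : ℝ)]
  ring

variable {μ : ℝ}

lemma signlessLap_joinEmpty_eigenvector_inl (hμt : μ ≠ t) {y : Fin s → ℝ} {z : Fin t → ℝ}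
    (h : signlessLap (joinEmpty s G) *ᵥ Sum.elim y z = μ • Sum.elim y z) (i : Fin s) :
    y i = (∑ j, z j) / (μ - t) := by
  have hi := congrFun h (.inl i)
  simp only [signlessLap_joinEmpty_mulVec, Sum.elim_inl, Pi.smul_apply, smul_eq_mul] at hi
  rw [eq_div_iff (sub_ne_zero.mpr hμt)]
  linarith

lemma le_sub_one_of_forall_le_dotProduct_mulVec
    (hμ : ∀ x, μ * (x ⬝ᵥ x) ≤ x ⬝ᵥ (signlessLap (joinEmpty s G) *ᵥ x)) (j : Fin t) :
    μ ≤ t - 1 := by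
  have hy : (fun _ => -1 : Fin s → ℝ) ⬝ᵥ (fun _ => -1) = s := by simp [dotProduct]
  have hz : Pi.single j (1 : ℝ) ⬝ᵥ Pi.single j 1 = 1 := by simp
  have hQz : Pi.single j (1 : ℝ) ⬝ᵥ ((signlessLap G + (s : ℝ) • 1) *ᵥ Pi.single j 1) =
      G.degree j + s := by
    simp [signlessLap]
  have h := hμ (Sum.elim (fun _ => -1) (Pi.single j 1))
  rw [dotProduct_signlessLap_joinEmpty_mulVec, sumElim_dotProduct_sumElim, hy, hz, hQz] at h
  simp only [sum_const, card_univ, Fintype.card_fin, nsmul_eq_mul, sum_pi_single', mem_univ,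
    if_true] at h
  have hd : (G.degree j : ℝ) + 1 ≤ t := by
    exact_mod_cast (Fintype.card_fin t ▸ G.degree_lt_card_verts j)
  exact le_of_mul_le_mul_right (by linarith) (by positivity : (0 : ℝ) < s + 1)

lemma sub_lt_of_mulVec_eq_smul (hdeg : ∀ j, t < s + G.degree j) (hμt : μ ≠ t)
    {x : Fin s ⊕ Fin t → ℝ} (hx0 : x ≠ 0) (hx : signlessLap (joinEmpty s G) *ᵥ x = μ • x) :
    (t : ℝ) - s < μ := by
  obtain ⟨y, z, rfl⟩ : ∃ y z, x = Sum.elim y z := ⟨_, _, (Sum.elim_comp_inl_inr x).symm⟩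
  have hz : 0 < z ⬝ᵥ z := by
    refine lt_of_le_of_ne (by simpa using dotProduct_star_self_nonneg z) fun h => hx0 ?_
    rw [eq_comm, dotProduct_self_eq_zero] at h
    subst h
    ext (i | j) <;> simp [signlessLap_joinEmpty_eigenvector_inl G hμt hx]
  have hy : 0 ≤ y ⬝ᵥ y := by simpa using dotProduct_star_self_nonneg y
  have hdegsum : t * (y ⬝ᵥ y) + (t + 1) * (z ⬝ᵥ z) ≤
      ∑ v, ((joinEmpty s G).degree v : ℝ) * Sum.elim y z v * Sum.elim y z v := by
    simp only [Fintype.sum_sum_type, Sum.elim_inl, Sum.elim_inr, joinEmpty_degree_inl,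
      joinEmpty_degree_inr, dotProduct, mul_sum, mul_assoc]
    gcongr with j
    · exact mul_self_nonneg _
    · exact_mod_cast hdeg j
  have hQ := le_dotProduct_signlessLap_mulVec (joinEmpty s G) (Sum.elim y z)
  rw [hx, dotProduct_smul, smul_eq_mul, sumElim_dotProduct_sumElim, Fintype.card_sum,
    Fintype.card_fin, Fintype.card_fin] at hQ
  push_cast at hQ
  nlinarith

end Join

/-- The paper's `Q_μ`. For `μ ≠ t` the `S`-part of an eigenvector of `Q(H)` for `μ` is constant,
and eliminating it leaves an eigenvector of `Q_μ` for `μ` (a Schur complement). -/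
noncomputable def reducedSignlessLap (s : ℕ) {t : ℕ} (G : SimpleGraph (Fin t)) (μ : ℝ) :
    Matrix (Fin t) (Fin t) ℝ :=
  signlessLap G + (s : ℝ) • 1 - ((s : ℝ) / (t - μ)) • of fun _ _ => 1

section Reduced

variable {s t : ℕ} (G : SimpleGraph (Fin t)) {μ : ℝ}

lemma reducedSignlessLap_mulVec (z : Fin t → ℝ) :
    reducedSignlessLap s G μ *ᵥ z =
      (signlessLap G + (s : ℝ) • 1) *ᵥ z - fun _ => (s : ℝ) / (t - μ) * ∑ j, z j := by
  rw [reducedSignlessLap, sub_mulVec, smul_mulVec]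
  congr 1
  ext j
  simp [mulVec, dotProduct]

lemma reducedSignlessLap_apply_of_ne {i j : Fin t} (hij : i ≠ j) :
    reducedSignlessLap s G μ i j = signlessLap G i j - s / ((t : ℝ) - μ) := by
  simp [reducedSignlessLap, one_apply_ne hij]

lemma reducedSignlessLap_apply_neg (hlow : (t : ℝ) - s < μ) (hμt : μ < t) {i j : Fin t}
    (hij : i ≠ j) : reducedSignlessLap s G μ i j < 0 := by
  have hQ : signlessLap G i j ≤ 1 := by
    simp only [signlessLap, if_neg hij, zero_add]
    split_ifs <;> norm_num
  have hfrac : 1 < (s : ℝ) / (t - μ) := (one_lt_div (by linarith)).mpr (by linarith)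
  rw [reducedSignlessLap_apply_of_ne G hij]
  linarith

lemma reducedSignlessLap_mulVec_eq_smul (hμt : μ ≠ t) {y : Fin s → ℝ} {z : Fin t → ℝ}
    (h : signlessLap (joinEmpty s G) *ᵥ Sum.elim y z = μ • Sum.elim y z) :
    reducedSignlessLap s G μ *ᵥ z = μ • z := by
  have hy : ∑ i, y i = - ((s : ℝ) / (t - μ) * ∑ j, z j) := by
    simp only [signlessLap_joinEmpty_eigenvector_inl G hμt h, sum_const, card_univ,
      Fintype.card_fin, nsmul_eq_mul]
    rw [← neg_sub, div_neg]
    ring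
  ext j
  have hj := congrFun h (.inr j)
  simp only [signlessLap_joinEmpty_mulVec, Sum.elim_inr, Pi.smul_apply, smul_eq_mul, hy] at hj
  simp only [reducedSignlessLap_mulVec, Pi.sub_apply, Pi.smul_apply, smul_eq_mul]
  linarith

lemma reducedSignlessLap_isHermitian : (reducedSignlessLap s G μ).IsHermitian :=
  ((signlessLap_isHermitian G).add (isHermitian_one.smul (IsSelfAdjoint.all _))).sub
    (IsHermitian.smul (by ext; simp) (IsSelfAdjoint.all _))

lemma posSemidef_reducedSignlessLap_sub (hμt : μ ≠ t)
    (hμ : ∀ x, μ * (x ⬝ᵥ x) ≤ x ⬝ᵥ (signlessLap (joinEmpty s G) *ᵥ x)) :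
    (reducedSignlessLap s G μ - μ • 1).PosSemidef := by
  refine (posSemidef_sub_smul_one_iff (reducedSignlessLap_isHermitian G)).mpr fun w => ?_
  -- the best constant on `S` to pair with `w` in the Rayleigh quotient of `Q(H)`
  set c := -(∑ j, w j) / (t - μ)
  have hc : (t - μ) * c ^ 2 + 2 * c * ∑ j, w j = -((∑ j, w j) ^ 2 / (t - μ)) := by
    have : (t : ℝ) - μ ≠ 0 := sub_ne_zero.mpr hμt.symm
    simp only [c]
    field_simp
    ring
  have hcc : (fun _ => c : Fin s → ℝ) ⬝ᵥ (fun _ => c) = s * c ^ 2 := by simp [dotProduct, sq]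
  have h := hμ (Sum.elim (fun _ => c) w)
  rw [dotProduct_signlessLap_joinEmpty_mulVec, sumElim_dotProduct_sumElim, hcc] at h
  simp only [sum_const, card_univ, Fintype.card_fin, nsmul_eq_mul] at h
  have hJ : w ⬝ᵥ (reducedSignlessLap s G μ *ᵥ w) =
      w ⬝ᵥ ((signlessLap G + (s : ℝ) • 1) *ᵥ w) - (s : ℝ) / (t - μ) * (∑ j, w j) ^ 2 := by
    rw [reducedSignlessLap_mulVec, dotProduct_sub]
    simp only [dotProduct, ← sum_mul]
    ring
  rw [hJ]
  linear_combination h + s * hc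

theorem isSRoth_of_lt (hlow : (t : ℝ) - s < μ) (hμt : μ < t)
    (hμ : ∀ x, μ * (x ⬝ᵥ x) ≤ x ⬝ᵥ (signlessLap (joinEmpty s G) *ᵥ x)) :
    IsSRoth (s := s) G μ := by
  intro x hx0 hx
  obtain ⟨y, z, rfl⟩ : ∃ y z, x = Sum.elim y z := ⟨_, _, (Sum.elim_comp_inl_inr x).symm⟩
  have hy := signlessLap_joinEmpty_eigenvector_inl G hμt.ne hx
  have hz0 : z ≠ 0 := by
    rintro rfl
    exact hx0 (by ext (i | j) <;> simp [hy])
  have : Nonempty (Fin t) := let ⟨j, _⟩ := Function.ne_iff.mp hz0; ⟨j⟩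
  have hμt' : μ - t < 0 := by linarith
  rcases pos_or_neg_of_mulVec_eq_smul (fun i j => reducedSignlessLap_apply_neg G hlow hμt)
      (posSemidef_reducedSignlessLap_sub G hμt.ne hμ) hz0
      (reducedSignlessLap_mulVec_eq_smul G hμt.ne hx) with hpos | hneg
  · have hsum : 0 < ∑ j, z j := sum_pos (fun j _ => hpos j) univ_nonempty
    exact .inr ⟨fun i => by simpa [hy] using div_neg_of_pos_of_neg hsum hμt', hpos⟩
  · have hsum : ∑ j, z j < 0 := sum_neg (fun j _ => hneg j) univ_nonempty
    exact .inl ⟨fun i => by simpa [hy] using div_pos_of_neg_of_neg hsum hμt', hneg⟩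

end Reduced

theorem stmt14_general {s t : ℕ} (G : SimpleGraph (Fin t))
    (hδ : t - s < G.minDegree) (μ : ℝ)
    (hμ : ∃ x : Fin s ⊕ Fin t → ℝ, x ≠ 0 ∧ signlessLap (joinEmpty s G) *ᵥ x = μ • x)
    (hmin : ∀ (ν : ℝ) (x : Fin s ⊕ Fin t → ℝ), x ≠ 0 →
      signlessLap (joinEmpty s G) *ᵥ x = ν • x → μ ≤ ν) :
    (t : ℝ) - s < μ ∧
    (∀ i j : Fin t, i ≠ j → signlessLap G i j - s / ((t : ℝ) - μ) < 0) ∧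
    IsSRoth (s := s) G μ := by
  have hdeg : ∀ j, t < s + G.degree j := fun j => by
    have := G.minDegree_le_degree j
    omega
  obtain ⟨j⟩ : Nonempty (Fin t) := by
    refine Fin.pos_iff_nonempty.mp (Nat.pos_of_ne_zero ?_)
    rintro rfl
    simp [minDegree_of_subsingleton] at hδ
  have hray := (posSemidef_sub_smul_one_iff (signlessLap_isHermitian _)).mp
    (posSemidef_sub_smul_one_of_forall_le (signlessLap_isHermitian _) hmin)
  have hμt : μ < t := (le_sub_one_of_forall_le_dotProduct_mulVec G hray j).trans_lt (sub_one_lt _)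
  obtain ⟨x, hx0, hx⟩ := hμ
  have hlow := sub_lt_of_mulVec_eq_smul G hdeg hμt.ne hx0 hx
  refine ⟨hlow, fun i j hij => ?_, isSRoth_of_lt G hlow hμt hray⟩
  rw [← reducedSignlessLap_apply_of_ne G hij]
  exact reducedSignlessLap_apply_neg G hlow hμt hij

/-- If `t > s` and `δ(G) > t − s`, then `μ(H) > t − s`, the matrix
`Q_μ = Q(G) + sI − (s/(t−μ))J` has all off-diagonal entries strictly negative
(it is a `Z`-matrix), and `H = \overline{K}_s ∨ G` is `S`-Roth. -/
theorem stmt14 {s t : ℕ} (hts : s < t) (G : SimpleGraph (Fin t))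
    (hδ : t - s < G.minDegree) (μ : ℝ)
    (hμ : ∃ x : Fin s ⊕ Fin t → ℝ, x ≠ 0 ∧ signlessLap (joinEmpty s G) *ᵥ x = μ • x)
    (hmin : ∀ (ν : ℝ) (x : Fin s ⊕ Fin t → ℝ), x ≠ 0 →
      signlessLap (joinEmpty s G) *ᵥ x = ν • x → μ ≤ ν) :
    (t : ℝ) - s < μ ∧
    (∀ i j : Fin t, i ≠ j → signlessLap G i j - s / ((t : ℝ) - μ) < 0) ∧
    IsSRoth (s := s) G μ :=
  stmt14_general G hδ μ hμ hmin
end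

section
/- Let A = Q(C_k) + λI where C_k is the cycle on k vertices and λ > 0, and let Ã = A^{-1}. Then each diagonal entry satisfies ã_{ii} ≤ (λ+1)/(λ(λ+3)), and each off-diagonal entry satisfies |ã_{ij}| ≤ ã_{ii}/(λ+1) for j ≠ i. -/
/-!
The signless Laplacian is `Q(G) = N Nᵀ` for the unsigned incidence matrix `N`, so
`A = Q(C_k) + λI` is positive definite with `A - λI ⪰ 0`. For `μ ≥ λ` and any `b`,
`1/μ ≤ p(μ)` with `p(μ) - 1/μ = (μ - λ)(μ - b)² / (λ b² μ)`; applied to `A` this bounds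
`tr A⁻¹` by `tr A` and `tr A²` (Bai–Golub), and `b = λ + 3` is the optimal choice.
Rotations are automorphisms of the cycle, so all diagonal entries of `A⁻¹` equal `tr A⁻¹ / k`.

For the off-diagonal entries, take the largest off-diagonal entry in a row of `A⁻¹`: the
corresponding entry of `A⁻¹ A = I` is `0`, and since `A` has `deg + λ` on the diagonal and `1`
at neighbours, this forces `(λ + 1) |ã_ij| ≤ ã_ii`.
-/

open Matrix SimpleGraph
open scoped Classical

open Finset

namespace Matrix

variable {n : Type*} [Fintype n] [DecidableEq n]

theorem inv_apply_eq_of_submatrix_eq {A : Matrix n n ℝ} {e : n ≃ n} (h : A.submatrix e e = A)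
    (i j : n) : A⁻¹ (e i) (e j) = A⁻¹ i j := by
  conv_rhs => rw [← h, inv_submatrix_equiv]
  rfl

theorem trace_inv_le_of_posSemidef_sub {A : Matrix n n ℝ} {a : ℝ} (ha : 0 < a)
    (hA : (A - a • 1).PosSemidef) (b : ℝ) :
    a * b ^ 2 * A⁻¹.trace ≤
      (A * A).trace - (a + 2 * b) * A.trace + (b ^ 2 + 2 * a * b) * Fintype.card n := by
  have hApd : A.PosDef := by
    simpa using (PosDef.one.smul ha).add_posSemidef hA
  have hdet : IsUnit A.det := (isUnit_iff_isUnit_det A).mp hApd.isUnit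
  have hAB : A * A⁻¹ = 1 := mul_nonsing_inv A hdet
  have hBA : A⁻¹ * A = 1 := nonsing_inv_mul A hdet
  have hAt : Aᵀ = A := by
    simpa [conjTranspose_eq_transpose_of_trivial] using hApd.isHermitian.eq
  have hB : A⁻¹ᵀ = A⁻¹ := by rw [transpose_nonsing_inv, hAt]
  set B := A⁻¹
  set C := A - b • 1
  have hC : Cᴴ = C := by
    simp [C, hAt]
  have hD : (A - a • 1)ᴴ = A - a • 1 := hA.isHermitian.eq
  -- `1 - a B = B (A - a) A B` is congruent to `(A - a)² + a (A - a)`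
  have hpsd : (1 - a • B).PosSemidef := by
    have h : 1 - a • B = Bᴴ * ((A - a • 1)ᴴ * (A - a • 1) + a • (A - a • 1)) * B := by
      rw [hD, conjTranspose_eq_transpose_of_trivial, hB]
      have hsq : (A - a • 1) * (A - a • 1) + a • (A - a • 1) = A * A - a • A := by
        simp only [sub_mul, mul_sub, Matrix.smul_mul, Matrix.mul_smul, one_mul, mul_one]; module
      rw [hsq, mul_sub, sub_mul, ← mul_assoc, hBA, one_mul, hAB, Matrix.mul_smul, Matrix.smul_mul,
        hBA, one_mul]
    rw [h]
    exact ((posSemidef_conjTranspose_mul_self _).add (hA.smul ha.le)).conjTranspose_mul_mul_same B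
  have hpoly : (1 - a • B) * C * C =
      A * A - (a + 2 * b) • A + (b ^ 2 + 2 * a * b) • 1 - (a * b ^ 2) • B := by
    simp only [C, sub_mul, mul_sub, Matrix.smul_mul, Matrix.mul_smul, one_mul, mul_one,
      mul_assoc, hBA]
    module
  have h := (hpsd.conjTranspose_mul_mul_same C).trace_nonneg
  rw [hC, mul_assoc, trace_mul_comm, hpoly] at h
  simp only [trace_sub, trace_add, trace_smul, trace_one, smul_eq_mul] at h
  linarith

theorem abs_apply_le_of_mul_eq_one {A B : Matrix n n ℝ} (hBA : B * A = 1) {q : n} {r : ℝ}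
    (hgap : ∀ p ≠ q, 0 < |A p p| - ∑ k ∈ (univ.erase p).erase q, |A k p|)
    (hr : ∀ p ≠ q, |A q p| ≤ r * (|A p p| - ∑ k ∈ (univ.erase p).erase q, |A k p|))
    {p : n} (hp : p ≠ q) : |B q p| ≤ r * |B q q| := by
  obtain ⟨i, hi, hmax⟩ := (univ.erase q).exists_max_image (fun p => |B q p|) ⟨p, by simpa⟩
  have hiq : i ≠ q := (mem_erase.mp hi).1
  set s := (univ.erase i).erase q
  have hrow : B q i * A i i = -(B q q * A q i + ∑ k ∈ s, B q k * A k i) := by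
    have h := congrFun (congrFun hBA q) i
    rw [mul_apply, one_apply_ne hiq.symm, ← add_sum_erase _ _ (mem_univ i),
      ← add_sum_erase _ _ (mem_erase.mpr ⟨hiq.symm, mem_univ q⟩)] at h
    linarith
  have hsum : |∑ k ∈ s, B q k * A k i| ≤ (∑ k ∈ s, |A k i|) * |B q i| := by
    rw [sum_mul]
    refine (abs_sum_le_sum_abs _ _).trans (sum_le_sum fun k hk => ?_)
    rw [abs_mul, mul_comm]
    exact mul_le_mul_of_nonneg_left (hmax k (mem_erase_of_ne_of_mem (ne_of_mem_erase hk)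
      (mem_univ k))) (abs_nonneg _)
  have hgap_i : (|A i i| - ∑ k ∈ s, |A k i|) * |B q i| ≤ |A q i| * |B q q| := by
    have h : |A i i| * |B q i| ≤ |A q i| * |B q q| + (∑ k ∈ s, |A k i|) * |B q i| :=
      calc |A i i| * |B q i| = |B q q * A q i + ∑ k ∈ s, B q k * A k i| := by
            rw [mul_comm, ← abs_mul, hrow, abs_neg]
        _ ≤ |B q q * A q i| + |∑ k ∈ s, B q k * A k i| := abs_add_le _ _
        _ ≤ _ := by rw [abs_mul, mul_comm]; exact add_le_add_right hsum _
    linarith [sub_mul |A i i| (∑ k ∈ s, |A k i|) |B q i|]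
  have hi_le : |B q i| ≤ r * |B q q| := by
    refine le_of_mul_le_mul_left ?_ (hgap i hiq)
    calc _ ≤ |A q i| * |B q q| := hgap_i
      _ ≤ r * (|A i i| - ∑ k ∈ s, |A k i|) * |B q q| :=
        mul_le_mul_of_nonneg_right (hr i hiq) (abs_nonneg _)
      _ = _ := by ring
  exact (hmax p (mem_erase_of_ne_of_mem hp (mem_univ p))).trans hi_le

end Matrix

section SignlessLaplacian

variable {V : Type*} [Fintype V] {G : SimpleGraph V}

theorem signlessLap_eq_incMatrix_mul_transpose :
    signlessLap G = G.incMatrix ℝ * (G.incMatrix ℝ)ᵀ := by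
  ext i j
  rw [incMatrix_mul_transpose]
  by_cases h : i = j
  · subst h; simp [signlessLap]
  · simp [signlessLap, h]

theorem posSemidef_signlessLap : (signlessLap G).PosSemidef := by
  rw [signlessLap_eq_incMatrix_mul_transpose, ← conjTranspose_eq_transpose_of_trivial]
  exact posSemidef_self_mul_conjTranspose _

theorem signlessLap_submatrix_iso {W : Type*} [Fintype W] {G' : SimpleGraph W} (f : G ≃g G') :
    (signlessLap G').submatrix f f = signlessLap G := by
  ext i j
  simp [signlessLap, f.injective.eq_iff, f.map_adj_iff]

variable [DecidableEq V]

theorem posDef_signlessLap_add_smul {c : ℝ} (hc : 0 < c) : (signlessLap G + c • 1).PosDef :=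
  PosDef.posSemidef_add posSemidef_signlessLap (PosDef.one.smul hc)

theorem signlessLap_add_smul_apply_of_ne (c : ℝ) {i j : V} (h : i ≠ j) :
    (signlessLap G + c • 1) i j = if G.Adj i j then 1 else 0 := by
  simp [signlessLap, h]

theorem abs_signlessLap_add_smul_apply_self_sub_sum {c : ℝ} (hc : 0 ≤ c) {p q : V}
    (hpq : p ≠ q) :
    |(signlessLap G + c • 1) p p| -
        ∑ k ∈ (univ.erase p).erase q, |(signlessLap G + c • 1) k p| =
      c + if G.Adj q p then 1 else 0 := by
  have hdeg : ∑ k ∈ univ.erase p, (if G.Adj k p then (1 : ℝ) else 0) = G.degree p := by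
    rw [sum_erase _ (by simp), sum_boole]
    simp only [adj_comm, ← card_neighborFinset_eq_degree, neighborFinset_eq_filter]
  rw [← add_sum_erase _ _ (mem_erase.mpr ⟨hpq.symm, mem_univ q⟩)] at hdeg
  have hpp : (signlessLap G + c • 1) p p = G.degree p + c := by simp [signlessLap]
  have hoff : ∀ k ∈ (univ.erase p).erase q,
      |(signlessLap G + c • 1) k p| = if G.Adj k p then 1 else 0 := fun k hk => by
    rw [signlessLap_add_smul_apply_of_ne c (ne_of_mem_erase (mem_of_mem_erase hk))]
    split_ifs <;> simp
  rw [hpp, abs_of_nonneg (by positivity), sum_congr rfl hoff]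
  linarith

theorem abs_inv_signlessLap_add_smul_apply_le {c : ℝ} (hc : 0 < c) {p q : V} (hpq : p ≠ q) :
    |(signlessLap G + c • 1)⁻¹ q p| ≤ (signlessLap G + c • 1)⁻¹ q q / (c + 1) := by
  have hA := posDef_signlessLap_add_smul (G := G) hc
  have hBA := nonsing_inv_mul _ ((isUnit_iff_isUnit_det _).mp hA.isUnit)
  have h := abs_apply_le_of_mul_eq_one hBA (r := 1 / (c + 1))
    (fun p hp => by rw [abs_signlessLap_add_smul_apply_self_sub_sum hc.le hp]; positivity)
    (fun p hp => by
      rw [abs_signlessLap_add_smul_apply_self_sub_sum hc.le hp,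
        signlessLap_add_smul_apply_of_ne c hp.symm]
      split_ifs
      · rw [abs_one, one_div_mul_cancel (by positivity)]
      · rw [abs_zero, add_zero]; positivity) hpq
  rwa [abs_of_pos (hA.inv.diag_pos), one_div_mul_eq_div] at h

theorem inv_signlessLap_add_smul_apply_iso (c : ℝ) (f : G ≃g G) (i j : V) :
    (signlessLap G + c • 1)⁻¹ (f i) (f j) = (signlessLap G + c • 1)⁻¹ i j := by
  refine inv_apply_eq_of_submatrix_eq (e := f.toEquiv) ?_ i j
  rw [submatrix_add, Pi.add_apply, Pi.add_apply, submatrix_smul, Pi.smul_apply, Pi.smul_apply,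
    submatrix_one_equiv]
  exact congrArg (· + c • 1) (signlessLap_submatrix_iso f)

theorem SimpleGraph.IsRegularOfDegree.signlessLap_eq {d : ℕ} (hd : G.IsRegularOfDegree d) :
    signlessLap G = (d : ℝ) • 1 + G.adjMatrix ℝ := by
  ext i j
  by_cases h : i = j
  · subst h; simp [signlessLap, hd.degree_eq]
  · simp [signlessLap, h]

theorem SimpleGraph.IsRegularOfDegree.trace_signlessLap_add_smul {d : ℕ}
    (hd : G.IsRegularOfDegree d) (c : ℝ) :
    (signlessLap G + c • 1).trace = Fintype.card V * (d + c) := by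
  simp only [hd.signlessLap_eq, trace_add, trace_smul, trace_one, smul_eq_mul, trace_adjMatrix,
    add_zero]
  ring

theorem SimpleGraph.IsRegularOfDegree.trace_mul_self_signlessLap_add_smul {d : ℕ}
    (hd : G.IsRegularOfDegree d) (c : ℝ) :
    ((signlessLap G + c • 1) * (signlessLap G + c • 1)).trace =
      Fintype.card V * ((d + c) ^ 2 + d) := by
  have hsq : (G.adjMatrix ℝ * G.adjMatrix ℝ).trace = Fintype.card V * d := by
    simp only [trace, diag_apply, adjMatrix_mul_self_apply_self, hd.degree_eq, sum_const, card_univ,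
      nsmul_eq_mul]
  have hA : signlessLap G + c • 1 = (d + c) • 1 + G.adjMatrix ℝ := by
    rw [hd.signlessLap_eq]; module
  rw [hA]
  simp only [add_mul, mul_add, Matrix.smul_mul, Matrix.mul_smul, one_mul, mul_one, smul_smul,
    trace_add, trace_smul, trace_one, trace_adjMatrix, hsq, smul_eq_mul]
  ring

theorem SimpleGraph.IsRegularOfDegree.trace_inv_signlessLap_add_smul_le {d : ℕ}
    (hd : G.IsRegularOfDegree d) {c : ℝ} (hc : 0 < c) (b : ℝ) :
    c * b ^ 2 * (signlessLap G + c • 1)⁻¹.trace ≤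
      Fintype.card V * ((d + c) ^ 2 + d - (c + 2 * b) * (d + c) + b ^ 2 + 2 * c * b) := by
  have h := trace_inv_le_of_posSemidef_sub (A := signlessLap G + c • 1) hc
    (by rw [add_sub_cancel_right]; exact posSemidef_signlessLap) b
  rw [hd.trace_mul_self_signlessLap_add_smul, hd.trace_signlessLap_add_smul] at h
  linarith

end SignlessLaplacian

def SimpleGraph.cycleGraph.addRight {n : ℕ} [NeZero n] (t : Fin n) :
    cycleGraph n ≃g cycleGraph n where
  toEquiv := Equiv.addRight t
  map_rel_iff' := by simp [cycleGraph_adj']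

theorem inv_signlessLap_cycleGraph_add_smul_apply_self_le {m : ℕ} {c : ℝ} (hc : 0 < c)
    (i : Fin (m + 3)) :
    (signlessLap (cycleGraph (m + 3)) + c • 1)⁻¹ i i ≤ (c + 1) / (c * (c + 3)) := by
  set B := (signlessLap (cycleGraph (m + 3)) + c • 1)⁻¹
  have hdiag (j : Fin (m + 3)) : B j j = B i i := by
    have h := inv_signlessLap_add_smul_apply_iso c (cycleGraph.addRight (j - i)) i i
    rwa [show cycleGraph.addRight (j - i) i = j from add_sub_cancel i j] at h
  have htr : B.trace = (m + 3) * B i i := by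
    simp only [trace, diag_apply, hdiag, sum_const, card_univ, Fintype.card_fin, nsmul_eq_mul]
    push_cast; ring
  have h := IsRegularOfDegree.trace_inv_signlessLap_add_smul_le (G := cycleGraph (m + 3)) (d := 2)
    (fun _ => by convert cycleGraph_degree_three_le) hc (c + 3)
  rw [htr, Fintype.card_fin] at h
  have hB : c * (c + 3) ^ 2 * B i i ≤ (c + 1) * (c + 3) := by
    refine le_of_mul_le_mul_left ?_ (by positivity : (0 : ℝ) < m + 3)
    push_cast at h
    linarith
  rw [le_div_iff₀ (by positivity)]
  refine le_of_mul_le_mul_left ?_ (by positivity : (0 : ℝ) < c + 3)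
  linarith

/-- For `A = Q(C_k) + λI` with `λ > 0` and `Ã = A⁻¹`: every diagonal entry satisfies
`ã_{ii} ≤ (λ+1)/(λ(λ+3))`, and every off-diagonal entry satisfies
`|ã_{ij}| ≤ ã_{ii}/(λ+1)`. -/
theorem stmt19 {k : ℕ} (hk : 3 ≤ k) (lam : ℝ) (hlam : 0 < lam)
    (A : Matrix (Fin k) (Fin k) ℝ)
    (hA : A = signlessLap (SimpleGraph.cycleGraph k) +
      lam • (1 : Matrix (Fin k) (Fin k) ℝ)) :
    (∀ i : Fin k, A⁻¹ i i ≤ (lam + 1) / (lam * (lam + 3))) ∧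
    (∀ i j : Fin k, j ≠ i → |A⁻¹ i j| ≤ A⁻¹ i i / (lam + 1)) := by
  obtain ⟨m, rfl⟩ := Nat.exists_eq_add_of_le' hk
  subst hA
  exact ⟨inv_signlessLap_cycleGraph_add_smul_apply_self_le hlam,
    fun i j hji => abs_inv_signlessLap_add_smul_apply_le hlam hji⟩
end
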